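/- arXiv:1805.06444 — 8 statements merged into one kernel-verified Lean document; each statement's English description precedes it below -/
import Mathlib

section
/- If V is μ-strongly convex (i.e. V − (μ/2)‖·‖² is convex), then the mean value discrete gradient satisfies the strong monotonicity estimate ⟨∇̄V(x,y) − ∇̄V(x,z), y − z⟩ ≥ (μ/2)‖y − z‖² for all x, y, z ∈ ℝⁿ. -/
open RealInnerProductSpace

section aux

variable {n : ℕ}

/-- continuity of the gradient of a C¹ function -/
lemma grad_cont {V : EuclideanSpace ℝ (Fin n) → ℝ} (hV : ContDiff ℝ 1 V) :
    Continuous (gradient V) := by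
  have h1 : Continuous (fderiv ℝ V) := hV.continuous_fderiv one_ne_zero
  have : Continuous fun p => (InnerProductSpace.toDual ℝ (EuclideanSpace ℝ (Fin n))).symm
      (fderiv ℝ V p) :=
    (InnerProductSpace.toDual ℝ (EuclideanSpace ℝ (Fin n))).symm.continuous.comp h1
  exact this

lemma fderiv_eq_inner_grad {V : EuclideanSpace ℝ (Fin n) → ℝ} (c v : EuclideanSpace ℝ (Fin n)) :
    fderiv ℝ V c v = ⟪gradient V c, v⟫ := by
  have : fderiv ℝ V c = InnerProductSpace.toDual ℝ _ (gradient V c) := by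
    simp [gradient]
  rw [this]; rfl

/-- strong monotonicity of the gradient -/
lemma grad_strong_mono {V : EuclideanSpace ℝ (Fin n) → ℝ} (hV : ContDiff ℝ 1 V)
    {μ : ℝ} (hconv : ConvexOn ℝ Set.univ (fun x => V x - μ / 2 * ‖x‖^2))
    (a b : EuclideanSpace ℝ (Fin n)) :
    ⟪gradient V a - gradient V b, a - b⟫ ≥ μ * ‖a - b‖^2 := by
  set c : ℝ → EuclideanSpace ℝ (Fin n) := fun t => b + t • (a - b) with hc
  have hdiff : Differentiable ℝ V := hV.differentiable one_ne_zero
  have hcder : ∀ t : ℝ, HasDerivAt c (a - b) t := by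
    intro t
    simpa [c] using ((hasDerivAt_id t).smul_const (a - b)).const_add b
  -- h(t) = V (c t) - μ/2 ‖c t‖²
  set h : ℝ → ℝ := fun t => V (c t) - μ / 2 * ‖c t‖^2 with hh
  have hlm : ∀ t : ℝ, (AffineMap.lineMap b a : ℝ →ᵃ[ℝ] EuclideanSpace ℝ (Fin n)) t = c t := by
    intro t
    simp only [AffineMap.lineMap_apply, c, vsub_eq_sub, vadd_eq_add]
    module
  have hconvh : ConvexOn ℝ Set.univ h := by
    have h0 := hconv.comp_affineMap (AffineMap.lineMap b a)
    rw [Set.preimage_univ] at h0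
    have e : h = (fun x => V x - μ / 2 * ‖x‖^2) ∘ ⇑(AffineMap.lineMap b a) := by
      funext t
      simp only [Function.comp_apply, hlm t, h]
    rw [e]; exact h0
  have hder : ∀ t : ℝ, HasDerivAt h
      (⟪gradient V (c t), a - b⟫ - μ * ⟪c t, a - b⟫) t := by
    intro t
    have h1 : HasDerivAt (fun t => V (c t)) (⟪gradient V (c t), a - b⟫) t := by
      have := (hdiff (c t)).hasFDerivAt.comp_hasDerivAt t (hcder t)
      rw [fderiv_eq_inner_grad] at this; exact this
    have h2 : HasDerivAt (fun t => ‖c t‖^2) (2 * ⟪c t, a - b⟫) t := by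
      have : HasDerivAt (fun t => ⟪c t, c t⟫) (⟪c t, a - b⟫ + ⟪a - b, c t⟫) t :=
        (hcder t).inner ℝ (hcder t)
      have h3 : ∀ t : ℝ, ‖c t‖^2 = ⟪c t, c t⟫ := fun t => (real_inner_self_eq_norm_sq _).symm
      simp_rw [h3]
      convert this using 1
      rw [real_inner_comm (a - b) (c t)]; ring
    have := h1.sub ((h2.const_mul (μ / 2)))
    exact this.congr_deriv (by ring)
  -- derivative of convex function is monotone: h'(0) ≤ slope ≤ h'(1)
  have key : ⟪gradient V (c 0), a - b⟫ - μ * ⟪c 0, a - b⟫ ≤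
      ⟪gradient V (c 1), a - b⟫ - μ * ⟪c 1, a - b⟫ := by
    have hs1 : ⟪gradient V (c 0), a - b⟫ - μ * ⟪c 0, a - b⟫ ≤ slope h 0 1 :=
      hconvh.le_slope_of_hasDerivAt (Set.mem_univ 0) (Set.mem_univ 1) one_pos (hder 0)
    have hs2 : slope h 0 1 ≤ ⟪gradient V (c 1), a - b⟫ - μ * ⟪c 1, a - b⟫ :=
      hconvh.slope_le_of_hasDerivAt (Set.mem_univ 0) (Set.mem_univ 1) one_pos (hder 1)
    linarith
  have hc0 : c 0 = b := by simp [c]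
  have hc1 : c 1 = a := by simp [c]
  rw [hc0, hc1] at key
  have : ⟪a - b, a - b⟫ = ⟪a, a - b⟫ - ⟪b, a - b⟫ := inner_sub_left a b (a - b)
  rw [inner_sub_left, ge_iff_le, ← real_inner_self_eq_norm_sq]
  rw [this]
  linarith

end aux

theorem mean_value_dg_strong_monotonicity
    {n : ℕ} (V : EuclideanSpace ℝ (Fin n) → ℝ) (hV : ContDiff ℝ 1 V)
    (μ : ℝ) (hμ : 0 ≤ μ)
    (hconv : ConvexOn ℝ Set.univ (fun x => V x - μ / 2 * ‖x‖^2))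
    (x y z : EuclideanSpace ℝ (Fin n)) :
    ⟪(∫ s in (0:ℝ)..1, gradient V ((1 - s) • x + s • y)) -
      (∫ s in (0:ℝ)..1, gradient V ((1 - s) • x + s • z)), y - z⟫ ≥ μ / 2 * ‖y - z‖^2 := by
  have hg := grad_cont hV
  set a : ℝ → EuclideanSpace ℝ (Fin n) := fun s => (1 - s) • x + s • y with ha
  set b : ℝ → EuclideanSpace ℝ (Fin n) := fun s => (1 - s) • x + s • z with hb
  have hca : Continuous a := by fun_prop
  have hcb : Continuous b := by fun_prop
  have hia : IntervalIntegrable (fun s => gradient V (a s)) MeasureTheory.volume 0 1 :=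
    (hg.comp hca).intervalIntegrable 0 1
  have hib : IntervalIntegrable (fun s => gradient V (b s)) MeasureTheory.volume 0 1 :=
    (hg.comp hcb).intervalIntegrable 0 1
  have hswap : ∀ (f : ℝ → EuclideanSpace ℝ (Fin n)),
      IntervalIntegrable f MeasureTheory.volume 0 1 →
      ⟪(∫ s in (0:ℝ)..1, f s), y - z⟫ = ∫ s in (0:ℝ)..1, ⟪f s, y - z⟫ := by
    intro f hf
    calc ⟪(∫ s in (0:ℝ)..1, f s), y - z⟫
        = (innerSL ℝ (y - z)) (∫ s in (0:ℝ)..1, f s) := by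
          rw [innerSL_apply_apply, real_inner_comm]
      _ = ∫ s in (0:ℝ)..1, (innerSL ℝ (y - z)) (f s) :=
          ((innerSL ℝ (y - z)).intervalIntegral_comp_comm hf).symm
      _ = ∫ s in (0:ℝ)..1, ⟪f s, y - z⟫ := by
          congr 1; funext s; rw [innerSL_apply_apply, real_inner_comm]
  rw [inner_sub_left, hswap _ hia, hswap _ hib, ← intervalIntegral.integral_sub]
  · have hpt : ∀ s ∈ Set.Icc (0:ℝ) 1,
        ⟪gradient V (a s), y - z⟫ - ⟪gradient V (b s), y - z⟫ ≥ μ * s * ‖y - z‖^2 := by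
      intro s hs
      have hab : a s - b s = s • (y - z) := by
        simp only [a, b]
        module
      have := grad_strong_mono hV hconv (a s) (b s)
      rw [hab] at this
      rw [inner_smul_right, norm_smul] at this
      rcases eq_or_lt_of_le hs.1 with h0 | h0
      · have habs : a s = b s := by
          have : a s - b s = 0 := by rw [hab, ← h0]; simp
          exact sub_eq_zero.mp this
        rw [habs, ← h0]
        simp
      · rw [Real.norm_eq_abs, abs_of_pos h0] at this
        have h2 : s * ⟪gradient V (a s) - gradient V (b s), y - z⟫ ≥ μ * (s * ‖y - z‖)^2 := this
        have h3 : ⟪gradient V (a s) - gradient V (b s), y - z⟫ ≥ μ * s * ‖y - z‖^2 := by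
          rw [ge_iff_le, ← mul_le_mul_iff_right₀ h0]
          calc s * (μ * s * ‖y - z‖^2) = μ * (s * ‖y - z‖)^2 := by ring
            _ ≤ s * ⟪gradient V (a s) - gradient V (b s), y - z⟫ := h2
        rw [inner_sub_left] at h3
        exact h3
    have hint : (∫ s in (0:ℝ)..1, μ * s * ‖y - z‖^2) = μ / 2 * ‖y - z‖^2 := by
      rw [intervalIntegral.integral_mul_const]
      simp_rw [mul_comm μ]
      rw [intervalIntegral.integral_mul_const, integral_id]
      ring
    rw [ge_iff_le, ← hint]
    apply intervalIntegral.integral_mono_on zero_le_one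
    · exact (by fun_prop : Continuous fun s : ℝ => μ * s * ‖y - z‖^2).intervalIntegrable 0 1
    · exact ((((hg.comp hca).inner (continuous_const : Continuous fun _ : ℝ => y - z)).sub
        ((hg.comp hcb).inner continuous_const)).intervalIntegrable 0 1)
    · intro s hs; exact hpt s hs
  · exact ((hg.comp hca).inner (continuous_const : Continuous fun _ : ℝ => y - z)).intervalIntegrable 0 1
  · exact ((hg.comp hcb).inner (continuous_const : Continuous fun _ : ℝ => y - z)).intervalIntegrable 0 1
end

section
/- Let f : ℝ → ℝ be convex with f(0) = 0, and suppose for i = 1,2 that αᵢ > 0 satisfies f(αᵢ)/αᵢ² = −1/τᵢ with τᵢ > 0. Then α₂ > α₁ implies τ₂ > τ₁; that is, the solution α(τ) of the scalar Itoh–Abe discrete gradient equation is strictly increasing in the time step τ. -/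
theorem scalar_dg_step_monotone_in_time_step
    (f : ℝ → ℝ) (hconv : ConvexOn ℝ Set.univ f) (hf0 : f 0 = 0)
    (α₁ α₂ τ₁ τ₂ : ℝ) (hα₁ : 0 < α₁) (hα₂ : 0 < α₂)
    (hτ₁ : 0 < τ₁) (hτ₂ : 0 < τ₂)
    (h₁ : f α₁ / α₁^2 = -(1/τ₁)) (h₂ : f α₂ / α₂^2 = -(1/τ₂))
    (h : α₂ > α₁) : τ₂ > τ₁ := by
  have hv1 : f α₁ = -(α₁^2/τ₁) := by field_simp at h₁ ⊢; linarith [h₁]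
  have hv2 : f α₂ = -(α₂^2/τ₂) := by field_simp at h₂ ⊢; linarith [h₂]
  -- convexity: f α₁ ≤ (α₁/α₂) * f α₂
  have hkey : f α₁ ≤ (α₁/α₂) * f α₂ := by
    have hab : α₁/α₂ + (1 - α₁/α₂) = 1 := by ring
    have ha : 0 ≤ α₁/α₂ := le_of_lt (div_pos hα₁ hα₂)
    have hb : 0 ≤ 1 - α₁/α₂ := by
      have : α₁/α₂ < 1 := (div_lt_one hα₂).mpr h
      linarith
    have := hconv.2 (Set.mem_univ α₂) (Set.mem_univ 0) ha hb hab
    have heq : (α₁/α₂) • α₂ + (1 - α₁/α₂) • (0:ℝ) = α₁ := by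
      rw [smul_eq_mul, smul_eq_mul, mul_zero, add_zero]; field_simp
    rw [heq, hf0] at this
    simpa using this
  rw [hv1, hv2] at hkey
  -- -(α₁²/τ₁) ≤ (α₁/α₂) * -(α₂²/τ₂) = -(α₁ α₂/τ₂)
  have h2' : (α₁/α₂) * -(α₂^2/τ₂) = -(α₁ * α₂ / τ₂) := by
    field_simp
  rw [h2'] at hkey
  -- so α₁ α₂ / τ₂ ≤ α₁² / τ₁, i.e. τ₁ α₂ ≤ τ₂ α₁ < τ₂ α₂ ⇒ τ₁ < τ₂
  have := (div_le_div_iff₀ hτ₂ hτ₁).mp (by linarith : α₁ * α₂ / τ₂ ≤ α₁^2 / τ₁)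
  nlinarith [mul_pos (mul_pos hα₁ hτ₁) (sub_pos.mpr h), mul_pos hα₁ hα₁]
end

section
/- Let V be convex and L-smooth, and let f(α) = V(x − αd) − V(x) for a unit vector d. If α > 0 solves f(α)/α² = −1/τ with τ < 2/L, then for every λ ∈ (τL/2, 1), f(α/λ) < f(α). Consequently, the decrease τ ↦ f(α(τ)) obtained by the Itoh–Abe step is strictly improved by increasing the time step, i.e. τ ↦ f(α(τ)) is decreasing on (0, 2/L). -/
open RealInnerProductSpace


set_option maxHeartbeats 1000000 in
theorem itoh_abe_small_time_step_suboptimal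
    {n : ℕ} (V : EuclideanSpace ℝ (Fin n) → ℝ) (hV : ContDiff ℝ 1 V)
    (hconv : ConvexOn ℝ Set.univ V)
    (L : ℝ) (hL : 0 < L)
    (hLip : ∀ x y, ‖gradient V x - gradient V y‖ ≤ L * ‖x - y‖)
    (x : EuclideanSpace ℝ (Fin n)) (d : EuclideanSpace ℝ (Fin n)) (hd : ‖d‖ = 1)
    (hdesc : 0 < ⟪gradient V x, d⟫)
    (f : ℝ → ℝ) (hf : ∀ α, f α = V (x - α • d) - V x)
    (α τ : ℝ) (hα : 0 < α) (hτ : 0 < τ) (hτL : τ < 2 / L)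
    (hsol : f α / α^2 = -(1/τ)) :
    ∀ lam : ℝ, lam ∈ Set.Ioo (τ * L / 2) 1 → f (α / lam) < f α := by
  intro lam ⟨hlam1, hlam2⟩
  have hlam0 : 0 < lam := lt_of_le_of_lt (by positivity) hlam1
  have hVd : Differentiable ℝ V := hV.differentiable one_ne_zero
  -- the curve and composed function
  set c : ℝ → EuclideanSpace ℝ (Fin n) := fun t => x - t • d with hc
  have hcder : ∀ t : ℝ, HasDerivAt c (-d) t := by
    intro t
    have : HasDerivAt (fun t : ℝ => t • d) d t := by
      simpa using (hasDerivAt_id t).smul_const d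
    simpa using (hasDerivAt_const t x).fun_sub this
  set φ : ℝ → ℝ := fun t => V (c t) with hφ
  have hφder : ∀ t : ℝ, HasDerivAt φ (-⟪gradient V (c t), d⟫) t := by
    intro t
    have h1 : HasDerivAt φ (fderiv ℝ V (c t) (-d)) t :=
      ((hVd (c t)).hasFDerivAt).comp_hasDerivAt t (hcder t)
    have h2 : fderiv ℝ V (c t) (-d) = -⟪gradient V (c t), d⟫ := by
      have h3 := ((hVd (c t)).hasGradientAt).hasFDerivAt.fderiv
      rw [h3]
      simp [InnerProductSpace.toDual_apply_apply, inner_neg_right]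
    rwa [h2] at h1
  set g : ℝ → ℝ := fun t => L / 2 * t ^ 2 - φ t with hg
  have hgder : ∀ t : ℝ, HasDerivAt g (L * t + ⟪gradient V (c t), d⟫) t := by
    intro t
    have h1 : HasDerivAt (fun t : ℝ => L / 2 * t ^ 2) (L * t) t := by
      have := (hasDerivAt_pow 2 t).const_mul (L / 2)
      simpa using this.congr_deriv (by ring)
    simpa using h1.fun_sub (hφder t)
  have hgdiff : Differentiable ℝ g := fun t => (hgder t).differentiableAt
  have hderiv_eq : deriv g = fun t => L * t + ⟪gradient V (c t), d⟫ :=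
    funext fun t => (hgder t).deriv
  have hmono : Monotone (deriv g) := by
    rw [hderiv_eq]
    intro s t hst
    have key : ⟪gradient V (c s), d⟫ - ⟪gradient V (c t), d⟫ ≤ L * (t - s) := by
      have h1 : ⟪gradient V (c s) - gradient V (c t), d⟫ ≤
          ‖gradient V (c s) - gradient V (c t)‖ * ‖d‖ :=
        real_inner_le_norm _ _
      have h2 : ‖gradient V (c s) - gradient V (c t)‖ ≤ L * ‖c s - c t‖ := hLip _ _
      have h3 : ‖c s - c t‖ = |t - s| := by
        have : c s - c t = (t - s) • d := by
          simp only [hc]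
          module
        rw [this, norm_smul, hd, mul_one, Real.norm_eq_abs]
      rw [inner_sub_left] at h1
      rw [h3, abs_of_nonneg (by linarith)] at h2
      rw [hd, mul_one] at h1
      linarith
    simp only []
    linarith
  have hgconv : ConvexOn ℝ Set.univ g := hmono.convexOn_univ_of_deriv hgdiff
  -- apply convexity at points s := α/lam and 0 with weights lam, 1-lam
  set s : ℝ := α / lam with hs_def
  have hs : 0 < s := by positivity
  have hα_eq : lam * s = α := by rw [hs_def]; field_simp
  have hkey := hgconv.2 (Set.mem_univ s) (Set.mem_univ (0 : ℝ))
    (le_of_lt hlam0) (by linarith : (0:ℝ) ≤ 1 - lam) (by ring)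
  have hpt : lam • s + (1 - lam) • (0 : ℝ) = α := by
    rw [smul_eq_mul, smul_eq_mul, mul_zero, add_zero, hα_eq]
  rw [hpt] at hkey
  -- unfold g
  have hφ0 : φ 0 = V x := by simp [hφ, hc]
  have hfφ : ∀ t : ℝ, f t = φ t - V x := fun t => by simp [hf t, hφ, hc]
  have hg_α : g α = L / 2 * α ^ 2 - (f α + V x) := by
    simp only [hg]; rw [hfφ α]; ring
  have hg_s : g s = L / 2 * s ^ 2 - (f s + V x) := by
    simp only [hg]; rw [hfφ s]; ring
  have hg_0 : g 0 = -V x := by simp [hg, hφ0]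
  rw [smul_eq_mul, smul_eq_mul, hg_α, hg_s, hg_0] at hkey
  have hbound : lam * f s ≤ f α + L / 2 * lam * s ^ 2 - L / 2 * α ^ 2 := by
    nlinarith [hkey]
  -- algebraic facts
  have hα2 : α ^ 2 = lam ^ 2 * s ^ 2 := by rw [← hα_eq]; ring
  have hfατ : τ * f α = -α ^ 2 := by
    have h2 : α ^ 2 ≠ 0 := by positivity
    field_simp at hsol
    linarith
  have hτL2 : L / 2 * lam * s ^ 2 < -f α := by
    have step : (τ * L / 2) * (lam * s ^ 2) < lam * (lam * s ^ 2) :=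
      mul_lt_mul_of_pos_right hlam1 (by positivity)
    have : τ * (L / 2 * lam * s ^ 2) < τ * (-f α) := by
      rw [show τ * (-f α) = -(τ * f α) by ring, hfατ, neg_neg, hα2]
      nlinarith [step]
    exact lt_of_mul_lt_mul_left this (le_of_lt hτ)
  clear_value s c φ g
  have hgoal : lam * f s < lam * f α := by
    have hprod : 0 < (1 - lam) * (-(f α + L / 2 * lam * s ^ 2)) :=
      mul_pos (by linarith) (by linarith)
    have hexpand : (1 - lam) * (-(f α + L / 2 * lam * s ^ 2)) =
        lam * f α - f α - L / 2 * lam * s ^ 2 + L / 2 * lam ^ 2 * s ^ 2 := by ring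
    rw [hexpand] at hprod
    rw [hα2] at hbound
    linarith
  exact lt_of_mul_lt_mul_left hgoal (le_of_lt hlam0)
end

section
/- Let V be μ-strongly convex and let f(α) = V(x − αd) − V(x) for a unit vector d. If α > 0 solves f(α)/α² = −1/τ with τ > 2/μ, then for every λ ∈ (2/(τμ), 1), f(λα) < f(α); hence the map τ ↦ f(α(τ)) is strictly increasing for τ > 2/μ, i.e. time steps larger than 2/μ yield suboptimal decrease. -/
open RealInnerProductSpace

theorem itoh_abe_large_time_step_suboptimal
    {n : ℕ} (V : EuclideanSpace ℝ (Fin n) → ℝ) (hV : ContDiff ℝ 1 V)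
    (μ : ℝ) (hμ : 0 < μ)
    (hconv : ConvexOn ℝ Set.univ (fun x => V x - μ / 2 * ‖x‖^2))
    (x : EuclideanSpace ℝ (Fin n)) (d : EuclideanSpace ℝ (Fin n)) (hd : ‖d‖ = 1)
    (hdesc : 0 < ⟪gradient V x, d⟫)
    (f : ℝ → ℝ) (hf : ∀ α, f α = V (x - α • d) - V x)
    (α τ : ℝ) (hα : 0 < α) (hτ : 2 / μ < τ)
    (hsol : f α / α^2 = -(1/τ)) :
    ∀ lam : ℝ, lam ∈ Set.Ioo (2 / (τ * μ)) 1 → f (lam * α) < f α := by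
  intro lam ⟨hl1, hl2⟩
  have hτ0 : 0 < τ := lt_trans (div_pos two_pos hμ) hτ
  have hlam0 : 0 < lam := lt_of_le_of_lt (le_of_lt (div_pos two_pos (mul_pos hτ0 hμ))) hl1
  -- norm expansions
  have hnorm : ∀ t : ℝ, ‖x - t • d‖^2 = ‖x‖^2 - 2 * t * ⟪x, d⟫ + t^2 := by
    intro t
    rw [norm_sub_sq_real, real_inner_smul_right, norm_smul]
    simp [hd, abs_mul_abs_self, mul_pow]
    ring
  -- strong convexity inequality
  have key := hconv.2 (Set.mem_univ (x - α • d)) (Set.mem_univ x)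
    (le_of_lt hlam0) (by linarith : (0:ℝ) ≤ 1 - lam) (by ring)
  have hcomb : lam • (x - α • d) + (1 - lam) • x = x - (lam * α) • d := by
    module
  rw [hcomb] at key
  simp only [smul_eq_mul] at key
  have h1 := hnorm (lam * α)
  have h2 := hnorm α
  have hfle : f (lam * α) ≤ lam * f α - μ / 2 * lam * (1 - lam) * α^2 := by
    rw [h1, h2] at key
    rw [hf, hf]
    nlinarith [key]
  -- f α = -(α^2/τ)
  have hfα : f α = -(α^2 / τ) := by
    have hα2 : α^2 ≠ 0 := pow_ne_zero 2 (ne_of_gt hα)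
    field_simp at hsol ⊢
    linarith [hsol]
  have hlam1 : 2 / (τ * μ) < lam := hl1
  have h3 : 1 / τ < μ * lam / 2 := by
    rw [div_lt_iff₀ (mul_pos hτ0 hμ)] at hlam1
    rw [div_lt_div_iff₀ hτ0 two_pos]
    nlinarith
  have hα2pos : 0 < α^2 := pow_pos hα 2
  calc f (lam * α) ≤ lam * f α - μ / 2 * lam * (1 - lam) * α^2 := hfle
    _ < f α := by
        rw [hfα]
        have : 0 < (1 - lam) * α^2 * (μ * lam / 2 - 1/τ) := by
          apply mul_pos (mul_pos (by linarith) hα2pos) (sub_pos.mpr h3)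
        have hexp : α^2 / τ = α^2 * (1/τ) := by ring
        nlinarith
end

section
/- Let V be L-smooth and let x⁺ = x − τ∇̄V(x, x⁺) be a step of the mean value discrete gradient method with time step τ > 0. Then ‖∇V(x)‖² ≤ 2(1/τ + (L²τ)/4)(V(x) − V(x⁺)). -/
open intervalIntegral MeasureTheory

theorem mean_value_dg_gradient_estimate
    {n : ℕ} (V : EuclideanSpace ℝ (Fin n) → ℝ) (hV : ContDiff ℝ 1 V)
    (L : ℝ) (hL : 0 < L)
    (hLip : ∀ x y, ‖gradient V x - gradient V y‖ ≤ L * ‖x - y‖)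
    (τ : ℝ) (hτ : 0 < τ) (x xp : EuclideanSpace ℝ (Fin n))
    (hstep : xp = x - τ • ∫ s in (0:ℝ)..1, gradient V ((1 - s) • x + s • xp)) :
    ‖gradient V x‖^2 ≤ 2 * (1/τ + L^2 * τ / 4) * (V x - V xp) := by
  set g := ∫ s in (0:ℝ)..1, gradient V ((1 - s) • x + s • xp) with hg
  -- gradient is Lipschitz, hence continuous
  have hlipW : LipschitzWith (Real.toNNReal L) (gradient V) := by
    apply LipschitzWith.of_dist_le_mul
    intro a b
    rw [dist_eq_norm, Real.coe_toNNReal _ hL.le]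
    exact hLip a b
  have hcontg : Continuous (gradient V) := hlipW.continuous
  -- convenient notation
  have hpath : ∀ s : ℝ, (1 - s) • x + s • xp = x + s • (xp - x) := by
    intro s
    rw [smul_sub, sub_smul, one_smul]
    abel
  have hcont : Continuous (fun s : ℝ => gradient V ((1 - s) • x + s • xp)) := by
    exact hcontg.comp (((continuous_const.sub continuous_id).smul continuous_const).add
      (continuous_id.smul continuous_const))
  have hint : IntervalIntegrable (fun s : ℝ => gradient V ((1 - s) • x + s • xp))
      volume 0 1 := hcont.intervalIntegrable 0 1
  -- xp - x = -τ • g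
  have hdiff : xp - x = (-τ) • g := by
    rw [hstep]; simp [neg_smul]
  -- V xp - V x = inner g (xp - x)
  have hderiv : ∀ s : ℝ, HasDerivAt (fun t : ℝ => V ((1 - t) • x + t • xp))
      (inner ℝ (gradient V ((1 - s) • x + s • xp)) (xp - x) : ℝ) s := by
    intro s
    have hgrad : HasFDerivAt V
        ((InnerProductSpace.toDual ℝ _ ) (gradient V ((1 - s) • x + s • xp)))
        ((1 - s) • x + s • xp) :=
      ((hV.differentiable one_ne_zero) _).hasGradientAt.hasFDerivAt
    have hline : HasDerivAt (fun t : ℝ => (1 - t) • x + t • xp) (xp - x) s := by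
      simp_rw [hpath]
      simpa using ((hasDerivAt_id s).smul_const (xp - x)).const_add x
    simpa [Function.comp_def] using hgrad.comp_hasDerivAt s hline
  have hFTC : V xp - V x =
      ∫ s in (0:ℝ)..1, (inner ℝ (gradient V ((1 - s) • x + s • xp)) (xp - x) : ℝ) := by
    have := intervalIntegral.integral_eq_sub_of_hasDerivAt
      (f := fun t : ℝ => V ((1 - t) • x + t • xp)) (a := (0:ℝ)) (b := (1:ℝ))
      (fun s _ => hderiv s)
      (by
        apply Continuous.intervalIntegrable
        exact (continuous_inner.comp (hcont.prodMk continuous_const)))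
    simpa using this.symm
  have hinner : (∫ s in (0:ℝ)..1, (inner ℝ (gradient V ((1 - s) • x + s • xp)) (xp - x) : ℝ))
      = inner ℝ g (xp - x) := by
    have h := ContinuousLinearMap.intervalIntegral_comp_comm
      ((innerSL ℝ (E := EuclideanSpace ℝ (Fin n))).flip (xp - x)) hint
    simp only [Function.comp, ContinuousLinearMap.flip_apply, innerSL_apply_apply] at h
    exact h
  have hdecrease : V x - V xp = τ * ‖g‖^2 := by
    have : V xp - V x = inner ℝ g ((-τ) • g) := by rw [hFTC, hinner, hdiff]
    rw [real_inner_smul_right, real_inner_self_eq_norm_sq] at this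
    linarith [this]
  -- bound ‖∇V x - g‖
  have hxpx : ‖xp - x‖ = τ * ‖g‖ := by
    rw [hdiff, norm_smul]
    simp [abs_of_pos hτ]
  have hbound : ‖gradient V x - g‖ ≤ L * τ * ‖g‖ / 2 := by
    have heq : gradient V x - g =
        ∫ s in (0:ℝ)..1, (gradient V x - gradient V ((1 - s) • x + s • xp)) := by
      rw [intervalIntegral.integral_sub (intervalIntegrable_const) hint]
      simp [hg]
    rw [heq]
    have h1 : (∀ s ∈ Set.uIcc (0:ℝ) 1,
        ‖gradient V x - gradient V ((1 - s) • x + s • xp)‖ ≤ s * (L * ‖xp - x‖)) := by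
      intro s hs
      have hs0 : 0 ≤ s := by
        rcases Set.mem_uIcc.mp hs with h | h
        · exact h.1
        · linarith [h.1]
      calc ‖gradient V x - gradient V ((1 - s) • x + s • xp)‖
          ≤ L * ‖x - ((1 - s) • x + s • xp)‖ := hLip _ _
        _ = L * (s * ‖xp - x‖) := by
            rw [hpath]
            have : x - (x + s • (xp - x)) = (-s) • (xp - x) := by
              rw [neg_smul]; abel
            rw [this, norm_smul]
            simp [abs_of_nonneg hs0]
        _ = s * (L * ‖xp - x‖) := by ring
    have h2 := intervalIntegral.norm_integral_le_of_norm_le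
      (μ := volume) (g := fun s : ℝ => s * (L * ‖xp - x‖)) zero_le_one
      (by
        rw [← Set.uIoc_of_le zero_le_one]
        filter_upwards with s hs
        exact h1 s (Set.uIoc_subset_uIcc hs))
      ((continuous_id.mul continuous_const).intervalIntegrable 0 1)
    have h3 : (∫ s in (0:ℝ)..1, s * (L * ‖xp - x‖)) = L * ‖xp - x‖ / 2 := by
      rw [intervalIntegral.integral_mul_const, integral_id]
      ring
    rw [h3, hxpx] at h2
    calc _ ≤ L * (τ * ‖g‖) / 2 := h2
      _ = L * τ * ‖g‖ / 2 := by ring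
  -- combine
  have htri : ‖gradient V x‖ ≤ (1 + L * τ / 2) * ‖g‖ := by
    calc ‖gradient V x‖ = ‖(gradient V x - g) + g‖ := by rw [sub_add_cancel]
      _ ≤ ‖gradient V x - g‖ + ‖g‖ := norm_add_le _ _
      _ ≤ L * τ * ‖g‖ / 2 + ‖g‖ := by linarith [hbound]
      _ = (1 + L * τ / 2) * ‖g‖ := by ring
  have hgnn : 0 ≤ ‖g‖ := norm_nonneg _
  have hsq : ‖gradient V x‖^2 ≤ (1 + L * τ / 2)^2 * ‖g‖^2 := by
    have := pow_le_pow_left₀ (norm_nonneg (gradient V x)) htri 2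
    calc ‖gradient V x‖^2 ≤ ((1 + L * τ / 2) * ‖g‖)^2 := this
      _ = (1 + L * τ / 2)^2 * ‖g‖^2 := by ring
  rw [hdecrease]
  have key : (1 + L * τ / 2)^2 ≤ 2 * (1/τ + L^2 * τ / 4) * τ := by
    have : 2 * (1/τ + L^2 * τ / 4) * τ = 2 + L^2 * τ^2 / 2 := by
      field_simp; ring
    rw [this]
    nlinarith [sq_nonneg (1 - L * τ / 2)]
  calc ‖gradient V x‖^2 ≤ (1 + L * τ / 2)^2 * ‖g‖^2 := hsq
    _ ≤ (2 * (1/τ + L^2 * τ / 4) * τ) * ‖g‖^2 :=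
        mul_le_mul_of_nonneg_right key (sq_nonneg _)
    _ = 2 * (1/τ + L^2 * τ / 4) * (τ * ‖g‖^2) := by ring
end

section
/- Let V be L-smooth and let x⁺ solve the Gonzalez discrete gradient step x⁺ = x − τ∇̄V(x,x⁺) with time step τ > 0. Then ‖∇V(x)‖² ≤ 2(1/τ + (L²τ)/2)(V(x) − V(x⁺)). -/
set_option maxHeartbeats 1000000
open RealInnerProductSpace

lemma taylor_bound {n : ℕ} (V : EuclideanSpace ℝ (Fin n) → ℝ) (hV : ContDiff ℝ 1 V)
    (L : ℝ) (hL : 0 ≤ L)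
    (hLip : ∀ x y, ‖gradient V x - gradient V y‖ ≤ L * ‖x - y‖)
    (x d : EuclideanSpace ℝ (Fin n)) :
    |V (x + d) - V x - ⟪gradient V x, d⟫| ≤ L / 2 * ‖d‖^2 := by
  have hdiff : ∀ z, DifferentiableAt ℝ V z := fun z => (hV.differentiable one_ne_zero) z
  have hgc : Continuous (gradient V) := by
    have : LipschitzWith (Real.toNNReal L) (gradient V) := by
      apply LipschitzWith.of_dist_le_mul
      intro a b
      simpa [dist_eq_norm, Real.coe_toNNReal L hL] using hLip a b
    exact this.continuous
  set f : ℝ → ℝ := fun t => V (x + t • d) with hf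
  have hderiv : ∀ t : ℝ, HasDerivAt f ⟪gradient V (x + t • d), d⟫ t := by
    intro t
    have h1 : HasDerivAt (fun t : ℝ => x + t • d) d t := by
      simpa using ((hasDerivAt_id t).smul_const d).const_add x
    have h2 := (hdiff (x + t • d)).hasGradientAt.hasFDerivAt
    have := h2.comp_hasDerivAt t h1
    simp at this ⊢
    exact this
  have hcont : Continuous fun t : ℝ => ⟪gradient V (x + t • d), d⟫ := by
    exact (hgc.comp (by continuity)).inner continuous_const
  have hFTC : V (x + d) - V x = ∫ t in (0:ℝ)..1, ⟪gradient V (x + t • d), d⟫ := by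
    rw [intervalIntegral.integral_eq_sub_of_hasDerivAt (fun t _ => hderiv t)
      (hcont.intervalIntegrable 0 1)]
    simp [hf]
  have hconst : ⟪gradient V x, d⟫ = ∫ t in (0:ℝ)..1, ⟪gradient V x, d⟫ := by simp
  set F : ℝ → ℝ := fun t => ⟪gradient V (x + t • d) - gradient V x, d⟫ with hF
  have hFc : Continuous F := by
    exact ((hgc.comp (by continuity)).sub continuous_const).inner continuous_const
  have key : V (x + d) - V x - ⟪gradient V x, d⟫ = ∫ t in (0:ℝ)..1, F t := by
    rw [hFTC, hconst]
    rw [← intervalIntegral.integral_sub (hcont.intervalIntegrable 0 1)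
      (intervalIntegrable_const)]
    congr 1; ext t; simp only [hF]; rw [inner_sub_left]
  rw [key]
  have hbound : ∀ t ∈ Set.Icc (0:ℝ) 1, ‖F t‖ ≤ L * t * ‖d‖^2 := by
    intro t ht
    calc ‖F t‖
        ≤ ‖gradient V (x + t • d) - gradient V x‖ * ‖d‖ := norm_inner_le_norm _ _
      _ ≤ (L * ‖(x + t • d) - x‖) * ‖d‖ := by
          gcongr; exact hLip _ _
      _ = L * t * ‖d‖^2 := by
          rw [add_sub_cancel_left, norm_smul, Real.norm_eq_abs, abs_of_nonneg ht.1]; ring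
  have h1 : |∫ t in (0:ℝ)..1, F t| ≤ ∫ t in (0:ℝ)..1, L * t * ‖d‖^2 := by
    rw [← Real.norm_eq_abs]
    refine le_trans (intervalIntegral.norm_integral_le_integral_norm zero_le_one) ?_
    apply intervalIntegral.integral_mono_on zero_le_one
    · exact (hFc.norm.intervalIntegrable 0 1)
    · exact (Continuous.intervalIntegrable (by continuity) 0 1)
    · intro t ht
      simpa using hbound t ht
  refine h1.trans (le_of_eq ?_)
  have : (fun t : ℝ => L * t * ‖d‖^2) = fun t : ℝ => (L * ‖d‖^2) * t := by ext t; ring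
  rw [this, intervalIntegral.integral_const_mul, integral_id]
  ring

theorem gonzalez_dg_gradient_estimate
    {n : ℕ} (V : EuclideanSpace ℝ (Fin n) → ℝ) (hV : ContDiff ℝ 1 V)
    (L : ℝ) (hL : 0 < L)
    (hLip : ∀ x y, ‖gradient V x - gradient V y‖ ≤ L * ‖x - y‖)
    (τ : ℝ) (hτ : 0 < τ) (x xp : EuclideanSpace ℝ (Fin n)) (hne : xp ≠ x)
    (hstep : xp = x - τ • (gradient V ((2:ℝ)⁻¹ • (x + xp)) +
      ((V xp - V x - ⟪gradient V ((2:ℝ)⁻¹ • (x + xp)), xp - x⟫) / ‖x - xp‖^2) • (xp - x))) :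
    ‖gradient V x‖^2 ≤ 2 * (1/τ + L^2 * τ / 2) * (V x - V xp) := by
  set m : EuclideanSpace ℝ (Fin n) := (2:ℝ)⁻¹ • (x + xp) with hm
  set d : EuclideanSpace ℝ (Fin n) := xp - x with hd
  have hd0 : d ≠ 0 := sub_ne_zero.2 hne
  have hDpos : (0:ℝ) < ‖d‖ := norm_pos_iff.2 hd0
  have hxmxp : ‖x - xp‖ = ‖d‖ := by rw [hd, norm_sub_rev]
  set c : ℝ := (V xp - V x - ⟪gradient V m, d⟫) / ‖d‖^2 with hc
  set g : EuclideanSpace ℝ (Fin n) := gradient V m + c • d with hg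
  have hstep2 : xp = x - τ • g := by
    rw [hg, hc, ← hxmxp]; exact hstep
  have hstep' : d = -(τ • g) := by
    show xp - x = -(τ • g)
    rw [hstep2]; abel
  -- discrete gradient property: ⟪g, d⟫ = V xp - V x
  have hcnorm : c * ‖d‖^2 = V xp - V x - ⟪gradient V m, d⟫ := by
    rw [hc]; field_simp
  have hgd : ⟪g, d⟫ = V xp - V x := by
    rw [hg, inner_add_left, real_inner_smul_left, real_inner_self_eq_norm_sq]
    nlinarith [hcnorm]
  have hdnorm : ‖d‖ = τ * ‖g‖ := by
    rw [hstep', norm_neg, norm_smul, Real.norm_eq_abs, abs_of_pos hτ]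
  have hgd' : ⟪g, d⟫ = -(τ * ‖g‖^2) := by
    rw [hstep', inner_neg_right, real_inner_smul_right, real_inner_self_eq_norm_sq]
  have hdec : V x - V xp = τ * ‖g‖^2 := by linarith [hgd, hgd']
  -- bound ‖∇V x - g‖² ≤ L²/2 ‖d‖²
  set e : EuclideanSpace ℝ (Fin n) := gradient V x - gradient V m with he
  have hxm : x - m = -((2:ℝ)⁻¹ • d) := by rw [hm, hd]; module
  have hE : ‖e‖ ≤ L * ‖d‖ / 2 := by
    calc ‖e‖ ≤ L * ‖x - m‖ := hLip x m
      _ = L * ‖d‖ / 2 := by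
        rw [hxm, norm_neg, norm_smul]; simp; ring
  have hβ : |⟪gradient V x, d⟫ - (V xp - V x)| ≤ L / 2 * ‖d‖^2 := by
    have := taylor_bound V hV L hL.le hLip x d
    rw [show x + d = xp from by rw [hd]; abel] at this
    rw [abs_sub_comm]; exact this
  have hed : ⟪e, d⟫ = ⟪gradient V x, d⟫ - ⟪gradient V m, d⟫ := by
    rw [he, inner_sub_left]
  have hkey : ‖gradient V x - g‖^2 ≤ L^2 / 2 * ‖d‖^2 := by
    have hxg : gradient V x - g = e - c • d := by rw [he, hg]; abel
    have hid : ‖e - c • d‖^2 = ‖e‖^2 - 2*(c*⟪e,d⟫) + c^2*‖d‖^2 := by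
      rw [norm_sub_sq_real, real_inner_smul_right, norm_smul, Real.norm_eq_abs]
      rw [mul_pow, sq_abs]
    rw [hxg, hid]
    have hβ' : ⟪e, d⟫ - c * ‖d‖^2 = ⟪gradient V x, d⟫ - (V xp - V x) := by
      rw [hed, hcnorm]; ring
    have hE0 : (0:ℝ) ≤ ‖e‖ := norm_nonneg _
    have hE2 : ‖e‖^2 ≤ L^2/4 * ‖d‖^2 := by nlinarith [hE, hE0, hDpos, hL.le]
    have hb2 : (⟪e, d⟫ - c * ‖d‖^2)^2 ≤ L^2/4 * ‖d‖^4 := by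
      have h0 : |⟪e, d⟫ - c * ‖d‖^2| ≤ L / 2 * ‖d‖^2 := by rw [hβ']; exact hβ
      nlinarith [h0, abs_nonneg (⟪e, d⟫ - c * ‖d‖^2), sq_abs (⟪e, d⟫ - c * ‖d‖^2)]
    have hD2 : (0:ℝ) < ‖d‖^2 := by positivity
    nlinarith [hE2, hb2, sq_nonneg ⟪e,d⟫, hD2, mul_le_mul_of_nonneg_right hE2 hD2.le]
  -- assemble
  have htri : ‖gradient V x‖ ≤ ‖g‖ + ‖gradient V x - g‖ := by
    calc ‖gradient V x‖ = ‖g + (gradient V x - g)‖ := by congr 1; abel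
      _ ≤ ‖g‖ + ‖gradient V x - g‖ := norm_add_le _ _
  have h2 : ‖gradient V x‖^2 ≤ 2*‖g‖^2 + 2*‖gradient V x - g‖^2 := by
    nlinarith [htri, norm_nonneg g, norm_nonneg (gradient V x - g), norm_nonneg (gradient V x),
      sq_nonneg (‖g‖ - ‖gradient V x - g‖)]
  have hfin : ‖gradient V x‖^2 ≤ 2*‖g‖^2 + L^2 * ‖d‖^2 := by nlinarith [hkey, h2]
  rw [hdec]
  have hd2 : ‖d‖^2 = τ^2 * ‖g‖^2 := by rw [hdnorm]; ring
  have hrhs : 2 * (1/τ + L^2 * τ / 2) * (τ * ‖g‖^2) = 2*‖g‖^2 + L^2 * (τ^2 * ‖g‖^2) := by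
    field_simp
  rw [hrhs]; rw [hd2] at hfin; linarith [hfin]
end

section
/- Let V : ℝⁿ → ℝ be C¹, convex, coercive, and L-smooth with minimizer x* and minimum V*, and let (x^k) satisfy the decrease estimate β(V(x^k) − V(x^{k+1})) ≥ ‖∇V(x^k)‖² with the iterates remaining in the sublevel set of x⁰, of diameter R. Then V(x^k) − V* ≤ βR²/(k + 2β/L) for all k. -/
open Filter Set

lemma tangent_le_of_convex {g : ℝ → ℝ} (hg : ConvexOn ℝ Set.univ g) {a b d : ℝ}
    (hab : a < b) (hd : HasDerivAt g d a) : g a + d * (b - a) ≤ g b := by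
  have h1 : Tendsto (slope g a) (nhdsWithin a (Set.Ioi a)) (nhds d) :=
    (hasDerivAt_iff_tendsto_slope.1 hd).mono_left
      (nhdsWithin_mono a (fun t ht => ne_of_gt ht))
  have h2 : ∀ᶠ t in nhdsWithin a (Set.Ioi a), slope g a t ≤ slope g a b := by
    filter_upwards [Ioo_mem_nhdsGT_of_mem ⟨le_refl a, hab⟩] with t ht
    simpa [slope_def_field] using hg.secant_mono (a := a) (x := t) (y := b) trivial trivial trivial
      (ne_of_gt ht.1) (ne_of_gt hab) ht.2.le
  have hd_le : d ≤ slope g a b := le_of_tendsto h1 h2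
  rw [slope_def_field] at hd_le
  have hba : 0 < b - a := by linarith
  have := (le_div_iff₀ hba).mp hd_le
  linarith

lemma line_hasDerivAt {n : ℕ} (V : EuclideanSpace ℝ (Fin n) → ℝ) (hV : ContDiff ℝ 1 V)
    (p u : EuclideanSpace ℝ (Fin n)) (t : ℝ) :
    HasDerivAt (fun s : ℝ => V (p + s • u))
      ((inner ℝ (gradient V (p + t • u)) u : ℝ)) t := by
  have hdiff : DifferentiableAt ℝ V (p + t • u) :=
    (hV.differentiable one_ne_zero).differentiableAt
  have hfd : HasFDerivAt V (InnerProductSpace.toDual ℝ _ (gradient V (p + t • u))) (p + t • u) :=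
    hasGradientAt_iff_hasFDerivAt.mp hdiff.hasGradientAt
  have hc : HasDerivAt (fun s : ℝ => p + s • u) u t := by
    simpa using ((hasDerivAt_id t).smul_const u).const_add p
  have := hfd.comp_hasDerivAt t hc
  rw [InnerProductSpace.toDual_apply_apply] at this
  exact this

lemma grad_ineq {n : ℕ} {V : EuclideanSpace ℝ (Fin n) → ℝ} (hV : ContDiff ℝ 1 V)
    (hconv : ConvexOn ℝ Set.univ V) (p q : EuclideanSpace ℝ (Fin n)) :
    V p + (inner ℝ (gradient V p) (q - p) : ℝ) ≤ V q := by
  set g : ℝ → ℝ := fun s => V (p + s • (q - p)) with hg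
  have hgconv : ConvexOn ℝ Set.univ g := by
    have := hconv.comp_affineMap (AffineMap.lineMap p q)
    rw [Set.preimage_univ] at this
    have hfun : g = V ∘ AffineMap.lineMap p q := by
      funext s
      simp [hg, AffineMap.lineMap_apply, add_comm]
    rw [hfun]
    exact this
  have hder : HasDerivAt g ((inner ℝ (gradient V (p + (0:ℝ) • (q - p))) (q - p) : ℝ)) 0 :=
    line_hasDerivAt V hV p (q - p) 0
  have := tangent_le_of_convex hgconv (by norm_num : (0:ℝ) < 1) hder
  simpa [hg] using this

lemma descent_at_min {n : ℕ} {V : EuclideanSpace ℝ (Fin n) → ℝ} (hV : ContDiff ℝ 1 V)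
    {L : ℝ} (hL : 0 < L)
    (hLip : ∀ x y, ‖gradient V x - gradient V y‖ ≤ L * ‖x - y‖)
    {xstar : EuclideanSpace ℝ (Fin n)} (hgrad0 : gradient V xstar = 0)
    (q : EuclideanSpace ℝ (Fin n)) :
    V q ≤ V xstar + L / 2 * ‖q - xstar‖ ^ 2 := by
  set u := q - xstar with hu
  set h : ℝ → ℝ := fun s => V (xstar + s • u) - L / 2 * s ^ 2 * ‖u‖ ^ 2 with hh
  have hder : ∀ s : ℝ, HasDerivAt h
      ((inner ℝ (gradient V (xstar + s • u)) u : ℝ) - L * s * ‖u‖ ^ 2) s := by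
    intro s
    have h1 := line_hasDerivAt V hV xstar u s
    have h2 : HasDerivAt (fun s : ℝ => L / 2 * s ^ 2 * ‖u‖ ^ 2) (L * s * ‖u‖ ^ 2) s := by
      have := ((hasDerivAt_pow 2 s).const_mul (L / 2)).mul_const (‖u‖ ^ 2)
      have e : L * s * ‖u‖ ^ 2 = L / 2 * (↑2 * s ^ (2 - 1)) * ‖u‖ ^ 2 := by
        push_cast
        ring
      rw [e]
      exact this
    exact h1.sub h2
  have hanti : AntitoneOn h (Set.Icc 0 1) := by
    apply antitoneOn_of_deriv_nonpos (convex_Icc 0 1)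
    · intro s hs
      exact ((hder s).differentiableAt).continuousAt.continuousWithinAt
    · intro s hs
      exact ((hder s).differentiableAt).differentiableWithinAt
    · intro s hs
      rw [interior_Icc] at hs
      rw [(hder s).deriv]
      have hb : (inner ℝ (gradient V (xstar + s • u)) u : ℝ) ≤ L * s * ‖u‖ ^ 2 := by
        have e1 : (inner ℝ (gradient V (xstar + s • u)) u : ℝ)
            = (inner ℝ (gradient V (xstar + s • u) - gradient V xstar) u : ℝ) := by
          rw [hgrad0, sub_zero]
        rw [e1]
        calc (inner ℝ (gradient V (xstar + s • u) - gradient V xstar) u : ℝ)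
            ≤ ‖gradient V (xstar + s • u) - gradient V xstar‖ * ‖u‖ := real_inner_le_norm _ _
          _ ≤ (L * ‖(xstar + s • u) - xstar‖) * ‖u‖ := by
              gcongr; exact hLip _ _
          _ = L * s * ‖u‖ ^ 2 := by
              rw [add_sub_cancel_left, norm_smul, Real.norm_eq_abs, abs_of_pos hs.1]
              ring
      linarith
  have key := hanti (Set.left_mem_Icc.mpr zero_le_one) (Set.right_mem_Icc.mpr zero_le_one)
    zero_le_one
  have e0 : h 0 = V xstar := by simp [hh]
  have e1 : h 1 = V q - L / 2 * ‖u‖ ^ 2 := by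
    simp only [hh, one_smul, one_pow, mul_one, hu, add_sub_cancel]
  rw [e0, e1] at key
  linarith
theorem convex_sublinear_convergence
    {n : ℕ} (V : EuclideanSpace ℝ (Fin n) → ℝ) (hV : ContDiff ℝ 1 V)
    (hconv : ConvexOn ℝ Set.univ V)
    (hcoercive : Filter.Tendsto V (Filter.cocompact _) Filter.atTop)
    (L : ℝ) (hL : 0 < L)
    (hLip : ∀ x y, ‖gradient V x - gradient V y‖ ≤ L * ‖x - y‖)
    (xstar : EuclideanSpace ℝ (Fin n)) (hmin : ∀ x, V xstar ≤ V x)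
    (x : ℕ → EuclideanSpace ℝ (Fin n))
    (R : ℝ)
    (hR : ∀ y z, V y ≤ V (x 0) → V z ≤ V (x 0) → ‖y - z‖ ≤ R)
    (hsub : ∀ k, V (x k) ≤ V (x 0))
    (β : ℝ) (hβ : 0 < β)
    (hdec : ∀ k, ‖gradient V (x k)‖^2 ≤ β * (V (x k) - V (x (k + 1)))) :
    ∀ k : ℕ, V (x k) - V xstar ≤ β * R^2 / (k + 2 * β / L) := by
  -- gradient vanishes at the minimizer
  have hgrad0 : gradient V xstar = 0 := by
    have hloc : IsLocalMin V xstar := Filter.Eventually.of_forall fun y => hmin y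
    have hfd := hloc.fderiv_eq_zero
    show (InnerProductSpace.toDual ℝ _).symm (fderiv ℝ V xstar) = 0
    rw [hfd]; simp
  have hR0 : 0 ≤ R := le_trans (norm_nonneg (x 0 - x 0)) (hR (x 0) (x 0) le_rfl le_rfl)
  set f : ℕ → ℝ := fun k => V (x k) - V xstar with hf
  have hf0 : ∀ k, 0 ≤ f k := fun k => sub_nonneg.mpr (hmin (x k))
  have hmono : ∀ k, f (k + 1) ≤ f k := by
    intro k
    have h3 : 0 ≤ β * (V (x k) - V (x (k + 1))) := le_trans (sq_nonneg _) (hdec k)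
    have : 0 ≤ V (x k) - V (x (k + 1)) := nonneg_of_mul_nonneg_right h3 hβ
    simp only [hf]; linarith
  -- key inequality from convexity
  have key : ∀ k, (f k) ^ 2 ≤ ‖gradient V (x k)‖ ^ 2 * R ^ 2 := by
    intro k
    have h1 := grad_ineq hV hconv (x k) xstar
    have e : (inner ℝ (gradient V (x k)) (xstar - x k) : ℝ)
        = - (inner ℝ (gradient V (x k)) (x k - xstar) : ℝ) := by
      rw [← inner_neg_right, neg_sub]
    rw [e] at h1
    have h2 : f k ≤ ‖gradient V (x k)‖ * ‖x k - xstar‖ := by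
      have := real_inner_le_norm (gradient V (x k)) (x k - xstar)
      simp only [hf]; linarith
    have h3 : ‖x k - xstar‖ ≤ R := hR (x k) xstar (hsub k) (hmin (x 0))
    have h4 : f k ≤ ‖gradient V (x k)‖ * R := by
      calc f k ≤ ‖gradient V (x k)‖ * ‖x k - xstar‖ := h2
        _ ≤ ‖gradient V (x k)‖ * R := by gcongr
    calc (f k) ^ 2 ≤ (‖gradient V (x k)‖ * R) ^ 2 := by
          exact pow_le_pow_left₀ (hf0 k) h4 2
      _ = ‖gradient V (x k)‖ ^ 2 * R ^ 2 := by ring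
  -- initial bound from L-smoothness
  have hinit : f 0 ≤ L / 2 * R ^ 2 := by
    have h1 := descent_at_min hV hL hLip hgrad0 (x 0)
    have h2 : ‖x 0 - xstar‖ ≤ R := hR (x 0) xstar le_rfl (hmin (x 0))
    have h3 : ‖x 0 - xstar‖ ^ 2 ≤ R ^ 2 := pow_le_pow_left₀ (norm_nonneg _) h2 2
    simp only [hf]
    nlinarith
  -- main induction
  have claim : ∀ k : ℕ, ((k : ℝ) + 2 * β / L) * f k ≤ β * R ^ 2 := by
    intro k
    induction k with
    | zero =>
      push_cast
      rw [zero_add]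
      have h1 : 2 * β / L * f 0 ≤ 2 * β / L * (L / 2 * R ^ 2) := by
        have hpos : 0 ≤ 2 * β / L := by positivity
        exact mul_le_mul_of_nonneg_left hinit hpos
      have h2 : 2 * β / L * (L / 2 * R ^ 2) = β * R ^ 2 := by
        field_simp
      rw [h2] at h1
      simpa using h1
    | succ k ih =>
      rcases (hf0 (k + 1)).eq_or_lt with he0 | hepos
      · rw [← he0, mul_zero]
        positivity
      · have hd : 0 < f k := lt_of_lt_of_le hepos (hmono k)
        have hC : (f k) ^ 2 ≤ β * R ^ 2 * (f k - f (k + 1)) := by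
          have h1 : ‖gradient V (x k)‖ ^ 2 * R ^ 2 ≤ β * (V (x k) - V (x (k + 1))) * R ^ 2 := by
            have := hdec k
            nlinarith [sq_nonneg R]
          have h2 : β * (V (x k) - V (x (k + 1))) * R ^ 2
              = β * R ^ 2 * (f k - f (k + 1)) := by
            simp only [hf]; ring
          calc (f k) ^ 2 ≤ ‖gradient V (x k)‖ ^ 2 * R ^ 2 := key k
            _ ≤ β * (V (x k) - V (x (k + 1))) * R ^ 2 := h1
            _ = β * R ^ 2 * (f k - f (k + 1)) := h2
        set C := β * R ^ 2 with hCdef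
        set s : ℝ := (k : ℝ) + 2 * β / L with hs
        have hspos : 0 < s := by positivity
        have hde : f (k + 1) ≤ f k := hmono k
        -- from s * f k ≤ C, C * (f k - f (k+1)) ≥ f k ^ 2, derive (s + 1) * f (k+1) ≤ C
        have hmul : (s + 1) * f (k + 1) * f k ≤ C * f k := by
          nlinarith [mul_le_mul_of_nonneg_right ih hepos.le,
            mul_le_mul_of_nonneg_left hde hd.le]
        have : (s + 1) * f (k + 1) ≤ C := le_of_mul_le_mul_right
          (by linarith [hmul]) hd
        push_cast
        calc ((k : ℝ) + 1 + 2 * β / L) * f (k + 1) = (s + 1) * f (k + 1) := by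
              rw [hs]; ring
          _ ≤ C := this
  intro k
  have hden : (0:ℝ) < (k : ℝ) + 2 * β / L := by positivity
  rw [le_div_iff₀ hden]
  have := claim k
  show f k * ((k : ℝ) + 2 * β / L) ≤ β * R ^ 2
  linarith [claim k]
end

section
/- If V is L-smooth with uniformly bounded gradient ‖∇V(x)‖ ≤ M for all x, then for every x the Gonzalez discrete gradient satisfies ‖∇̄V(x,y)‖ ≤ √2 · M for all y ≠ x. -/
open RealInnerProductSpace

theorem gonzalez_dg_bound
    {n : ℕ} (V : EuclideanSpace ℝ (Fin n) → ℝ) (hV : ContDiff ℝ 1 V)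
    (M : ℝ) (hM : ∀ x, ‖gradient V x‖ ≤ M)
    (x y : EuclideanSpace ℝ (Fin n)) (hne : y ≠ x) :
    ‖gradient V ((2:ℝ)⁻¹ • (x + y)) +
      ((V y - V x - ⟪gradient V ((2:ℝ)⁻¹ • (x + y)), y - x⟫) / ‖x - y‖^2) • (y - x)‖
      ≤ Real.sqrt 2 * M := by
  have hdiff : Differentiable ℝ V := hV.differentiable one_ne_zero
  set d := y - x with hdd
  have hd0 : d ≠ 0 := sub_ne_zero.mpr hne
  have hM0 : 0 ≤ M := (norm_nonneg _).trans (hM x)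
  have hfd : ∀ p, fderiv ℝ V p d = ⟪gradient V p, d⟫ := by
    intro p
    rw [((hdiff p).hasGradientAt.hasFDerivAt).fderiv]
    simp [InnerProductSpace.toDual_apply_apply]
  -- Mean value theorem along the segment
  have hline : ∀ t : ℝ, HasDerivAt (fun t : ℝ => V (x + t • d))
      ⟪gradient V (x + t • d), d⟫ t := by
    intro t
    have hγ : HasDerivAt (fun t : ℝ => x + t • d) d t := by
      simpa using ((hasDerivAt_id t).smul_const d).const_add x
    have := ((hdiff (x + t • d)).hasFDerivAt).comp_hasDerivAt t hγ
    rw [hfd] at this; exact this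
  obtain ⟨t, -, hslope⟩ := exists_hasDerivAt_eq_slope (fun t : ℝ => V (x + t • d))
      (fun t => ⟪gradient V (x + t • d), d⟫) one_pos
      (((hV.continuous).comp (by continuity)).continuousOn)
      (fun t _ => hline t)
  have hVy : V y - V x = ⟪gradient V (x + t • d), d⟫ := by
    have hxd : x + d = y := by rw [hdd]; abel
    simp only [zero_smul, add_zero, one_smul, sub_zero, div_one, hxd] at hslope
    rw [hslope]
  set g := gradient V ((2:ℝ)⁻¹ • (x + y)) with hg
  set w := gradient V (x + t • d) with hw
  set a := ⟪g, d⟫ with ha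
  set b := ⟪w, d⟫ with hb
  have hs : (0:ℝ) < ‖d‖^2 := pow_pos (norm_pos_iff.mpr hd0) 2
  have hnorm : ‖x - y‖^2 = ‖d‖^2 := by rw [norm_sub_rev]
  set c := (b - a) / ‖d‖^2 with hc
  have hgoal_eq : V y - V x - a = b - a := by rw [hVy]
  rw [hnorm, hgoal_eq]
  -- norm squared computation
  have hb2 : b^2 ≤ M^2 * ‖d‖^2 := by
    have h1 : |b| ≤ ‖w‖ * ‖d‖ := abs_real_inner_le_norm w d
    have h2 : b^2 ≤ (‖w‖ * ‖d‖)^2 := by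
      rw [← sq_abs]
      exact pow_le_pow_left₀ (abs_nonneg b) h1 2
    have h3 : (‖w‖ * ‖d‖)^2 ≤ M^2 * ‖d‖^2 := by
      rw [mul_pow]
      exact mul_le_mul_of_nonneg_right (pow_le_pow_left₀ (norm_nonneg _) (hM _) 2) (le_of_lt hs)
    linarith
  have hg2 : ‖g‖^2 ≤ M^2 := pow_le_pow_left₀ (norm_nonneg _) (hM _) 2
  have hsq : ‖g + c • d‖^2 ≤ 2 * M^2 := by
    have hexp : ‖g + c • d‖^2 = ‖g‖^2 + 2 * c * a + c^2 * ‖d‖^2 := by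
      rw [norm_add_sq_real, real_inner_smul_right, norm_smul]
      simp [mul_pow, ← ha]
      ring
    have heq : ‖g‖^2 + 2 * c * a + c^2 * ‖d‖^2 = ‖g‖^2 + (b^2 - a^2) / ‖d‖^2 := by
      rw [hc]; field_simp; ring
    rw [hexp, heq]
    have hfrac : (b^2 - a^2) / ‖d‖^2 ≤ M^2 := by
      rw [div_le_iff₀ hs]
      nlinarith [sq_nonneg a]
    linarith
  calc ‖g + c • d‖ = Real.sqrt (‖g + c • d‖^2) := (Real.sqrt_sq (norm_nonneg _)).symm
    _ ≤ Real.sqrt (2 * M^2) := Real.sqrt_le_sqrt hsq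
    _ = Real.sqrt 2 * M := by
        rw [Real.sqrt_mul (by norm_num), Real.sqrt_sq hM0]
end
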